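/- For every x ∈ [0, 1/2], Ψ(x) ≤ 2; equivalently, the relative cost f(x) = 1 + Ψ(x) of the block cycle rotation algorithm satisfies f(x) ≤ 3. -/

import Mathlib

/-- `T(x) = x·(1 + {1/x})` for `x ≠ 0`, `T(0) = 0`. -/
noncomputable def Tmap (x : ℝ) : ℝ := if x = 0 then 0 else x * (1 + Int.fract (1 / x))

/-- `I(x) = {1/x} / (1 + {1/x})` for `x ≠ 0`, `I(0) = 0`. -/
noncomputable def Imap (x : ℝ) : ℝ :=
  if x = 0 then 0 else Int.fract (1 / x) / (1 + Int.fract (1 / x))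

/-- `Ψ(x) = 2x + 2·Σ_{j ≥ 1} T(x)·T(I(x))·⋯·T(I^{j-1}(x))·I^{j}(x)`. -/
noncomputable def Psi (x : ℝ) : ℝ :=
  2 * x + 2 * ∑' j : ℕ, (∏ i ∈ Finset.range (j + 1), Tmap (Imap^[i] x)) * Imap^[j + 1] x

/-!
Writing `S(y)` for the series in `Ψ`, the summands satisfy the self-similarity
`S(y) = T(y) · (I(y) + S(I(y)))`, and `I` maps into `[0, 1/2]`. The invariant `y + S(y) ≤ 1` on
`[0, 1/2]` then propagates from `I(y)` to `y` because `T(y) ≤ 1 - y` there: writing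
`n = ⌊1/y⌋ ≥ 2`, one has `y + T(y) = 1 - (n - 2) y`. Run on partial sums this is an induction.
-/

open Finset

lemma Tmap_nonneg {y : ℝ} (hy : 0 ≤ y) : 0 ≤ Tmap y := by
  unfold Tmap
  split_ifs
  · exact le_rfl
  · have := Int.fract_nonneg (1 / y)
    positivity

lemma Imap_nonneg (y : ℝ) : 0 ≤ Imap y := by
  unfold Imap
  split_ifs
  · exact le_rfl
  · have := Int.fract_nonneg (1 / y)
    positivity

lemma Imap_le_half (y : ℝ) : Imap y ≤ 1 / 2 := by
  unfold Imap
  split_ifs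
  · norm_num
  · have h0 := Int.fract_nonneg (1 / y)
    have h1 := Int.fract_lt_one (1 / y)
    rw [div_le_iff₀ (by linarith)]
    linarith

lemma add_Tmap_le_one {y : ℝ} (hy : y ∈ Set.Icc (0 : ℝ) (1 / 2)) : y + Tmap y ≤ 1 := by
  obtain ⟨hy0, hy2⟩ := hy
  unfold Tmap
  split_ifs with h
  · linarith
  have hpos : 0 < y := lt_of_le_of_ne hy0 (Ne.symm h)
  have hfloor : (2 : ℝ) ≤ ⌊1 / y⌋ := by
    have : (2 : ℤ) ≤ ⌊1 / y⌋ := Int.le_floor.mpr (by push_cast; rw [le_div_iff₀ hpos]; linarith)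
    exact_mod_cast this
  have hT : y * (1 + Int.fract (1 / y)) = y + 1 - y * ⌊1 / y⌋ := by
    rw [Int.fract, mul_add, mul_sub, mul_one_div_cancel h]
    ring
  rw [hT]
  nlinarith

noncomputable def psiTerm (x : ℝ) (j : ℕ) : ℝ :=
  (∏ i ∈ range (j + 1), Tmap (Imap^[i] x)) * Imap^[j + 1] x

lemma psiTerm_zero (x : ℝ) : psiTerm x 0 = Tmap x * Imap x := by
  simp [psiTerm]

lemma psiTerm_succ (x : ℝ) (j : ℕ) : psiTerm x (j + 1) = Tmap x * psiTerm (Imap x) j := by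
  simp only [psiTerm, prod_range_succ' _ (j + 1), Function.iterate_succ_apply,
    Function.iterate_zero_apply]
  ring

lemma psiTerm_nonneg {x : ℝ} (hx : 0 ≤ x) (j : ℕ) : 0 ≤ psiTerm x j := by
  induction j generalizing x with
  | zero => rw [psiTerm_zero]; exact mul_nonneg (Tmap_nonneg hx) (Imap_nonneg x)
  | succ j ih => rw [psiTerm_succ]; exact mul_nonneg (Tmap_nonneg hx) (ih (Imap_nonneg x))

lemma sum_range_succ_psiTerm (x : ℝ) (N : ℕ) :
    ∑ j ∈ range (N + 1), psiTerm x j =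
      Tmap x * (Imap x + ∑ j ∈ range N, psiTerm (Imap x) j) := by
  rw [sum_range_succ', psiTerm_zero, mul_add, mul_sum, add_comm]
  simp only [psiTerm_succ]

lemma sum_range_psiTerm_le {x : ℝ} (hx : x ∈ Set.Icc (0 : ℝ) (1 / 2)) (N : ℕ) :
    ∑ j ∈ range N, psiTerm x j ≤ 1 - x := by
  induction N generalizing x with
  | zero => simp only [range_zero, sum_empty]; linarith [hx.2]
  | succ N ih =>
    have hI : Imap x + ∑ j ∈ range N, psiTerm (Imap x) j ≤ 1 := by
      linarith [ih ⟨Imap_nonneg x, Imap_le_half x⟩]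
    calc ∑ j ∈ range (N + 1), psiTerm x j
        = Tmap x * (Imap x + ∑ j ∈ range N, psiTerm (Imap x) j) := sum_range_succ_psiTerm x N
      _ ≤ Tmap x * 1 := mul_le_mul_of_nonneg_left hI (Tmap_nonneg hx.1)
      _ ≤ 1 - x := by linarith [add_Tmap_le_one hx]

lemma Psi_le_two {x : ℝ} (hx : x ∈ Set.Icc (0 : ℝ) (1 / 2)) : Psi x ≤ 2 := by
  have hsum : ∑' j, psiTerm x j ≤ 1 - x :=
    Real.tsum_le_of_sum_range_le (psiTerm_nonneg hx.1) (sum_range_psiTerm_le hx)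
  change 2 * x + 2 * ∑' j, psiTerm x j ≤ 2
  linarith

theorem stmt_9 : ∀ x ∈ Set.Icc (0 : ℝ) (1 / 2), Psi x ≤ 2 ∧ 1 + Psi x ≤ 3 := by
  intro x hx
  have hPsi := Psi_le_two hx
  exact ⟨hPsi, by linarith⟩
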